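/- Let P = T(V) with differential b₃ as above, and let S₂ act on P by σ(v₁⋯vₙ) = (-1)^{n(n-1)/2} v̄ₙ⋯v̄₁ (with ā = b, b̄ = a) and σ(1)=1. Then the complex of coinvariants P_{S₂} is acyclic. -/

import Mathlib

/-- The degree-`n` component `V^{⊗n}` for `V = span{a,b}` (a, b of degree 1),
realized as functions on words of length `n` over `{a,b}` (encoded as `Bool`,
with `false ↦ a`, `true ↦ b`); the degree-0 component of `T(V)` is `K`. -/
abbrev Wd (K : Type) (n : ℕ) := (Fin n → Bool) → K

/-- The differential `b₃` in positive degrees: insertion of `a+b` at the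
internal positions `i = 1, …, n-1` with signs `(-1)^{i+1}`; it vanishes on
degree 1, so `b₃(a) = b₃(b) = 0`. -/
def b3 (K : Type) [Field K] (n : ℕ) (X : Wd K n) : Wd K (n + 1) :=
  fun w => ∑ p : Fin (n + 1),
    (if (p : ℕ) = 0 ∨ (p : ℕ) = n then 0 else (-1 : K) ^ ((p : ℕ) + 1))
      * X (fun j => w (p.succAbove j))

/-- The differential `b₃` on the degree-0 component: `b₃(1) = (a+b)/2`. -/
def b3zero (K : Type) [Field K] (c : K) : Wd K 1 := fun _ => c / 2

/-- The `S₂`-action `σ(v₁⋯vₙ) = (-1)^{n(n-1)/2} v̄ₙ⋯v̄₁` (with `ā = b`, `b̄ = a`)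
on `V^{⊗n}`; on the degree-0 component `σ(1) = 1`, so the degree-0 relations
are trivial. -/
def sigmaRev (K : Type) [Field K] (n : ℕ) (X : Wd K n) : Wd K n :=
  fun w => (-1 : K) ^ (n * (n - 1) / 2) * X (fun j => ! w (Fin.rev j))

/-- The relation submodule defining the coinvariants `(V^{⊗n})_{S₂}`:
the span of all elements `Y - σ(Y)`. -/
def Nsig (K : Type) [Field K] (n : ℕ) : Submodule K (Wd K n) :=
  Submodule.span K {Z : Wd K n | ∃ Y : Wd K n, Z = Y - sigmaRev K n Y}

/-! Since `2` is invertible, an element `Z` vanishes in the coinvariants iff `Z + σ Z = 0`, and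
`b₃` commutes with `σ`. Hence for a cycle `X` of the coinvariant complex the symmetrization
`(X + σ X) / 2` is an honest `b₃`-cycle. In degrees `≥ 2` the complex `P` itself is acyclic,
contracting the second tensor factor against `a*` being a contracting homotopy, so the
symmetrization is a boundary, and `X` differs from it by `(X - σ X) / 2`, which vanishes in the
coinvariants. In degrees `0` and `1` the coinvariants of `V` are spanned by `a = b`, and
`b₃(1) = (a + b) / 2` is nonzero there: this kills the only cohomology class of `P`. -/

section InsertNth

variable {α : Type*} {n : ℕ}

lemma Fin.insertNth_one_zero (x : α) (w : Fin (n + 1) → α) :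
    Fin.insertNth (α := fun _ => α) 1 x w 0 = w 0 :=
  Fin.insertNth_apply_succAbove (α := fun _ => α) 1 x w 0

lemma Fin.insertNth_one_succ_succ (x : α) (w : Fin (n + 1) → α) (j : Fin n) :
    Fin.insertNth (α := fun _ => α) 1 x w j.succ.succ = w j.succ := by
  rw [← Fin.one_succAbove_succ]
  exact Fin.insertNth_apply_succAbove (α := fun _ => α) 1 x w j.succ

lemma Fin.insertNth_one_succAbove_succ_succ (x : α) (w : Fin (n + 2) → α) (r : Fin (n + 1)) :
    (fun j => Fin.insertNth (α := fun _ => α) 1 x w (r.succ.succ.succAbove j))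
      = Fin.insertNth 1 x (fun j => w (r.succ.succAbove j)) := by
  funext j
  induction j using Fin.cases with
  | zero => simp [Fin.insertNth_one_zero]
  | succ j =>
    induction j using Fin.cases with
    | zero => simp
    | succ j => simp [Fin.insertNth_one_succ_succ]

end InsertNth

/-- The contraction of the second tensor factor against the dual basis vector `x*`. -/
def contractSecond (K : Type) (x : Bool) (n : ℕ) (X : Wd K (n + 2)) : Wd K (n + 1) :=
  fun w => X (Fin.insertNth 1 x w)

section Differential

variable (K : Type) [Field K]

def b3Coeff (n p : ℕ) : K := if p = 0 ∨ p = n then 0 else (-1) ^ (p + 1)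

lemma b3_apply (n : ℕ) (X : Wd K n) (w : Fin (n + 1) → Bool) :
    b3 K n X w = ∑ p : Fin (n + 1), b3Coeff K n p * X (fun j => w (p.succAbove j)) := rfl

lemma b3Coeff_zero (n : ℕ) : b3Coeff K n 0 = 0 := by simp [b3Coeff]

lemma b3Coeff_one (n : ℕ) : b3Coeff K (n + 2) 1 = 1 := by simp [b3Coeff]

lemma b3Coeff_succ_succ (n p : ℕ) : b3Coeff K (n + 1) (p + 1 + 1) = -b3Coeff K n (p + 1) := by
  simp only [b3Coeff, Nat.add_right_cancel_iff, Nat.add_eq_zero_iff, one_ne_zero, and_false,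
    false_or]
  split_ifs <;> ring

lemma b3Coeff_rev {n p : ℕ} (hp : p ≤ n) : b3Coeff K n (n - p) = (-1) ^ n * b3Coeff K n p := by
  obtain ⟨k, rfl⟩ := Nat.exists_eq_add_of_le hp
  simp only [b3Coeff, Nat.add_sub_cancel_left]
  split_ifs
  · simp
  · omega
  · omega
  · rw [← pow_add, show p + k + (p + 1) = k + 1 + 2 * p by ring, pow_add _ (k + 1), pow_mul]
    simp

/-- Deleting position `1` undoes the insertion, giving the term `X`; the remaining terms cancel
in pairs, because deleting position `p + 2` commutes with inserting at position `1` while the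
signs of `b₃` in degrees `n + 2` and `n + 3` differ there. -/
theorem b3_contractSecond_add (x : Bool) (n : ℕ) (X : Wd K (n + 2)) :
    b3 K (n + 1) (contractSecond K x n X) + contractSecond K x (n + 1) (b3 K (n + 2) X) = X := by
  funext w
  simp only [Pi.add_apply, contractSecond, b3_apply, Fin.sum_univ_succ (n := n + 1),
    Fin.sum_univ_succ (n := n + 2), Fin.val_zero, Fin.val_succ, b3Coeff_zero, zero_mul, zero_add,
    Fin.succ_zero_eq_one, b3Coeff_one, one_mul, Fin.insertNth_apply_succAbove,
    Fin.insertNth_one_succAbove_succ_succ, b3Coeff_succ_succ, neg_mul, Finset.sum_neg_distrib]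
  abel

lemma sigmaRev_b3 (n : ℕ) (X : Wd K n) :
    sigmaRev K (n + 1) (b3 K n X) = b3 K n (sigmaRev K n X) := by
  funext w
  simp only [sigmaRev, b3_apply, Finset.mul_sum]
  refine Fintype.sum_bijective Fin.rev Fin.rev_bijective _ _ fun p => ?_
  simp only [Fin.rev_succAbove, Fin.val_rev]
  rw [Nat.triangle_succ, Nat.add_sub_add_right, b3Coeff_rev K (Nat.lt_succ_iff.mp p.isLt), pow_add]
  ring

lemma sigmaRev_sigmaRev (n : ℕ) (X : Wd K n) : sigmaRev K n (sigmaRev K n X) = X := by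
  funext w
  simp only [sigmaRev, Fin.rev_rev, Bool.not_not, ← mul_assoc, ← pow_add, ← two_mul, pow_mul]
  simp

def b3Linear (n : ℕ) : Wd K n →ₗ[K] Wd K (n + 1) where
  toFun := b3 K n
  map_add' X Y := by
    funext w
    simp only [b3_apply, Pi.add_apply, mul_add, Finset.sum_add_distrib]
  map_smul' c X := by
    funext w
    simp only [b3_apply, Pi.smul_apply, smul_eq_mul, Finset.mul_sum, RingHom.id_apply]
    exact Finset.sum_congr rfl fun _ _ => mul_left_comm _ _ _

def sigmaRevLinear (n : ℕ) : Wd K n →ₗ[K] Wd K n where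
  toFun := sigmaRev K n
  map_add' X Y := by
    funext w
    simp only [sigmaRev, Pi.add_apply]
    ring
  map_smul' c X := by
    funext w
    simp only [sigmaRev, Pi.smul_apply, smul_eq_mul, RingHom.id_apply]
    ring

lemma ker_b3Linear_le_range (n : ℕ) :
    LinearMap.ker (b3Linear K (n + 2)) ≤ LinearMap.range (b3Linear K (n + 1)) := by
  intro E hE
  have hE' : b3 K (n + 2) E = 0 := hE
  refine ⟨contractSecond K false n E, ?_⟩
  calc b3 K (n + 1) (contractSecond K false n E)
      = b3 K (n + 1) (contractSecond K false n E) + contractSecond K false (n + 1) 0 :=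
        (add_zero _).symm
    _ = E := by rw [← hE', b3_contractSecond_add]

end Differential

section Involution

variable {K M₁ M₂ M₃ : Type*} [Field K] [NeZero (2 : K)]
  [AddCommGroup M₁] [Module K M₁] [AddCommGroup M₂] [Module K M₂] [AddCommGroup M₃] [Module K M₃]

lemma mem_span_sub_involution_iff (σ : M₂ →ₗ[K] M₂) (hσ : ∀ Y, σ (σ Y) = Y) (Z : M₂) :
    Z ∈ Submodule.span K {Z | ∃ Y, Z = Y - σ Y} ↔ Z + σ Z = 0 := by
  constructor
  · intro hZ
    refine Submodule.span_induction ?_ (by simp) (fun Z₁ Z₂ _ _ h₁ h₂ => ?_)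
      (fun c Z _ h => ?_) hZ
    · rintro _ ⟨Y, rfl⟩
      simp [hσ]
    · rw [map_add, add_add_add_comm, h₁, h₂, add_zero]
    · rw [map_smul, ← smul_add, h, smul_zero]
  · intro hZ
    refine Submodule.subset_span ⟨(2⁻¹ : K) • Z, ?_⟩
    rw [map_smul, eq_neg_of_add_eq_zero_right hZ, smul_neg, sub_neg_eq_add, ← add_smul,
      ← two_mul, mul_inv_cancel₀ (two_ne_zero : (2 : K) ≠ 0), one_smul]

/-- `(X + σ₂ X) / 2` is a `d₂`-cycle, hence a boundary `d₁ Y`, and `X - d₁ Y = (X - σ₂ X) / 2`. -/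
theorem exists_sub_add_involution_eq_zero_of_ker_le_range (d₁ : M₁ →ₗ[K] M₂)
    (d₂ : M₂ →ₗ[K] M₃) (σ₂ : M₂ →ₗ[K] M₂) (σ₃ : M₃ →ₗ[K] M₃) (hσ₂ : ∀ Y, σ₂ (σ₂ Y) = Y)
    (hd₂ : ∀ Y, d₂ (σ₂ Y) = σ₃ (d₂ Y)) (hexact : LinearMap.ker d₂ ≤ LinearMap.range d₁)
    (X : M₂) (hX : d₂ X + σ₃ (d₂ X) = 0) :
    ∃ Y, X - d₁ Y + σ₂ (X - d₁ Y) = 0 := by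
  set E := (2⁻¹ : K) • (X + σ₂ X)
  have hE : d₂ E = 0 := by simp only [E, map_smul, map_add, hd₂, hX, smul_zero]
  obtain ⟨Y, hY⟩ := hexact hE
  refine ⟨Y, ?_⟩
  rw [hY]
  simp only [E, map_sub, map_smul, map_add, hσ₂]
  match_scalars <;> field_simp <;> ring

end Involution

section Coinvariants

variable (K : Type) [Field K] [NeZero (2 : K)]

lemma mem_Nsig_iff (n : ℕ) (Z : Wd K n) : Z ∈ Nsig K n ↔ Z + sigmaRev K n Z = 0 :=
  mem_span_sub_involution_iff (sigmaRevLinear K n) (sigmaRev_sigmaRev K n) Z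

lemma mem_Nsig_one_iff (Z : Wd K 1) :
    Z ∈ Nsig K 1 ↔ Z (fun _ => false) + Z (fun _ => true) = 0 := by
  have hword : ∀ w : Fin 1 → Bool, w = fun _ => w 0 := fun w => funext fun j => by
    rw [Fin.fin_one_eq_zero j]
  rw [mem_Nsig_iff, funext_iff]
  simp only [sigmaRev, Pi.add_apply, Pi.zero_apply, Nat.sub_self, mul_zero, Nat.zero_div,
    pow_zero, one_mul]
  constructor
  · intro h
    simpa using h fun _ => false
  · intro h w
    rw [hword w]
    cases w 0 <;> simpa [add_comm] using h

end Coinvariants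

/-- The complex of coinvariants `P_{S₂}` of `P = (T(V), b₃)` under the
`S₂`-action is acyclic (phrased at the level of representatives: an element of
`V^{⊗n}` is zero in the coinvariants iff it lies in `Nsig K n`). -/
theorem P_coinvariants_acyclic (K : Type) [Field K] [CharZero K] :
    -- vanishing at degree 0 (where the S₂-action is trivial)
    (∀ c : K, b3zero K c ∈ Nsig K 1 → c = 0) ∧
    -- vanishing at degree 1
    (∀ X : Wd K 1, b3 K 1 X ∈ Nsig K 2 → ∃ c : K, X - b3zero K c ∈ Nsig K 1) ∧
    -- vanishing at degrees ≥ 2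
    (∀ n : ℕ, ∀ X : Wd K (n + 2), b3 K (n + 2) X ∈ Nsig K (n + 3) →
      ∃ Y : Wd K (n + 1), X - b3 K (n + 1) Y ∈ Nsig K (n + 2)) := by
  refine ⟨fun c hc => ?_, fun X _ => ⟨X (fun _ => false) + X (fun _ => true), ?_⟩,
    fun n X hX => ?_⟩
  · rw [mem_Nsig_one_iff] at hc
    simpa [b3zero] using hc
  · rw [mem_Nsig_one_iff]
    simp only [b3zero, Pi.sub_apply]
    ring
  · rw [mem_Nsig_iff] at hX
    simp only [mem_Nsig_iff]
    exact exists_sub_add_involution_eq_zero_of_ker_le_range (b3Linear K (n + 1))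
      (b3Linear K (n + 2)) (sigmaRevLinear K (n + 2)) (sigmaRevLinear K (n + 3))
      (sigmaRev_sigmaRev K _) (fun Y => (sigmaRev_b3 K _ Y).symm) (ker_b3Linear_le_range K n) X hX
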